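/- arXiv:2603.02848 — 2 statements merged into one kernel-verified Lean document; each statement's English description precedes it below -/
import Mathlib

section
/- Let 1 → N → G → Q → 1 be a short exact sequence of groups. The conjugation action of G on N induces a homomorphism Q → Out(N), and if the center Z(N) is trivial, then the short exact sequence can be reconstructed from this outer action: G is isomorphic to the fiber product Aut(N) ×_{Out(N)} Q. -/
/-!
Conjugation `g ↦ (n ↦ g n g⁻¹)` sends `N` to the inner automorphisms, so `G → Aut N → Out N`
factors through `Q = G ⧸ N`, and `g ↦ (conj g, g N)` lands in `Aut N ×_{Out N} Q`. It is onto: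
if `f` and `conj g` agree in `Out N`, then `f = conj g ∘ conj n⁻¹` for some `n ∈ N`, and `g n⁻¹`
maps to `(f, g N)`. Its kernel consists of the `n ∈ N` acting trivially on `N`, i.e. `Z(N)`.
-/

/-- The inner automorphisms form a normal subgroup of `MulAut N`. -/
instance innRangeNormal (N : Type*) [Group N] :
    (MulAut.conj (G := N)).range.Normal := by
  constructor
  rintro _ ⟨n, rfl⟩ f
  refine ⟨f n, ?_⟩
  ext m
  simp [MulAut.conj_apply, map_mul, map_inv, mul_assoc]

/-- The outer automorphism group `Out N = Aut N / Inn N`. -/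
def Out (N : Type*) [Group N] :=
  MulAut N ⧸ (MulAut.conj (G := N)).range

instance (N : Type*) [Group N] : Group (Out N) :=
  inferInstanceAs (Group (MulAut N ⧸ (MulAut.conj (G := N)).range))

/-- The natural projection `Aut N → Out N`. -/
def Out.mk (N : Type*) [Group N] : MulAut N →* Out N :=
  QuotientGroup.mk' _

theorem MulAut.ker_conj (N : Type*) [Group N] :
    (MulAut.conj : N →* MulAut N).ker = Subgroup.center N := by
  ext n
  simp only [MonoidHom.mem_ker, MulEquiv.ext_iff, MulAut.conj_apply, MulAut.one_apply,
    Subgroup.mem_center_iff]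
  exact forall_congr' fun m => by rw [eq_comm, eq_mul_inv_iff_mul_eq]

abbrev Out.fiberProduct (N : Type*) [Group N] {Q : Type*} [Group Q] (ρ : Q →* Out N) :
    Subgroup (MulAut N × Q) :=
  MonoidHom.eqLocus ((Out.mk N).comp (MonoidHom.fst _ _)) (ρ.comp (MonoidHom.snd _ _))

namespace Subgroup

variable {G : Type*} [Group G] (N : Subgroup G) [N.Normal]

theorem out_mk_conjNormal_of_mem {n : G} (hn : n ∈ N) :
    Out.mk N (MulAut.conjNormal n) = 1 :=
  (QuotientGroup.eq_one_iff _).mpr ⟨⟨n, hn⟩, MulAut.conjNormal_val.symm⟩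

def outerAction : G ⧸ N →* Out N :=
  QuotientGroup.lift N ((Out.mk N).comp MulAut.conjNormal) fun _ => N.out_mk_conjNormal_of_mem

theorem outerAction_mk (g : G) :
    N.outerAction (g : G ⧸ N) = Out.mk N (MulAut.conjNormal g) :=
  rfl

def toOuterFiberProduct : G →* Out.fiberProduct N N.outerAction :=
  (MulAut.conjNormal.prod (QuotientGroup.mk' N)).codRestrict _ fun g => N.outerAction_mk g

theorem ker_toOuterFiberProduct : N.toOuterFiberProduct.ker = (center N).map N.subtype := by
  ext g
  constructor
  · intro hg
    have hconj : MulAut.conjNormal (H := N) g = 1 := congrArg (Prod.fst ∘ Subtype.val) hg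
    have hgN : g ∈ N :=
      (QuotientGroup.eq_one_iff g).mp (congrArg (Prod.snd ∘ Subtype.val) hg)
    refine ⟨⟨g, hgN⟩, ?_, rfl⟩
    rwa [SetLike.mem_coe, ← MulAut.ker_conj, MonoidHom.mem_ker, ← MulAut.conjNormal_val]
  · rintro ⟨n, hn, rfl⟩
    rw [SetLike.mem_coe, ← MulAut.ker_conj, MonoidHom.mem_ker] at hn
    exact Subtype.ext <| Prod.ext (MulAut.conjNormal_val.trans hn)
      ((QuotientGroup.eq_one_iff _).mpr n.2)

theorem toOuterFiberProduct_surjective : Function.Surjective N.toOuterFiberProduct := by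
  rintro ⟨⟨f, q⟩, hfq⟩
  obtain ⟨g, rfl⟩ := QuotientGroup.mk_surjective q
  obtain ⟨_, ⟨n, rfl⟩, hn⟩ := (QuotientGroup.mk'_eq_mk' _).mp
    (hfq.trans (N.outerAction_mk g))
  refine ⟨g * (n : G)⁻¹, Subtype.ext (Prod.ext ?_ ?_)⟩
  · change MulAut.conjNormal (g * (n : G)⁻¹) = f
    rw [map_mul, ← hn, map_inv, MulAut.conjNormal_val, mul_inv_cancel_right]
    rfl
  · change ((g * (n : G)⁻¹ : G) : G ⧸ N) = g
    rw [QuotientGroup.eq, mul_inv_rev, inv_inv, inv_mul_cancel_right]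
    exact n.2

end Subgroup

/-- given a short exact sequence `1 → N → G → Q → 1` (encoded by a
normal subgroup `N ⊴ G` with `Q = G ⧸ N`), conjugation induces a homomorphism
`ρ : Q → Out N` compatible with the conjugation action `G → Aut N`, and if
`Z(N) = 1` then `G` is isomorphic to the fiber product
`Aut N ×_{Out N} Q` of `Aut N → Out N` and `ρ : Q → Out N`. -/
theorem ses_reconstruction_from_outer_action
    {G : Type*} [Group G] (N : Subgroup G) [N.Normal]
    (hZ : Subgroup.center ↥N = ⊥) :
    ∃ ρ : G ⧸ N →* Out ↥N,
      (∀ g : G, ρ (QuotientGroup.mk g) = Out.mk ↥N (MulAut.conjNormal g)) ∧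
      Nonempty (G ≃*
        ↥(MonoidHom.eqLocus
            ((Out.mk ↥N).comp (MonoidHom.fst (MulAut ↥N) (G ⧸ N)))
            (ρ.comp (MonoidHom.snd (MulAut ↥N) (G ⧸ N))))) := by
  have hinj : Function.Injective N.toOuterFiberProduct := by
    rw [← MonoidHom.ker_eq_bot_iff, N.ker_toOuterFiberProduct, hZ, Subgroup.map_bot]
  exact ⟨N.outerAction, N.outerAction_mk,
    ⟨MulEquiv.ofBijective _ ⟨hinj, N.toOuterFiberProduct_surjective⟩⟩⟩
end

section
/- Let G and G' be groups and suppose Φ : G × S → G' × S' is an isomorphism where S, S' are finite groups with trivial center and G, G' have no nontrivial finite normal subgroups. Then Φ restricts to isomorphisms G ≅ G' and S ≅ S'. -/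
section aux
variable {A B : Type*} [Group A] [Group B]

lemma mem_inl_range_iff (x : A × B) : x ∈ (MonoidHom.inl A B).range ↔ x.2 = 1 := by
  constructor
  · rintro ⟨a, rfl⟩; rfl
  · intro h; exact ⟨x.1, Prod.ext rfl h.symm⟩

lemma mem_inr_range_iff (x : A × B) : x ∈ (MonoidHom.inr A B).range ↔ x.1 = 1 := by
  constructor
  · rintro ⟨a, rfl⟩; rfl
  · intro h; exact ⟨x.2, Prod.ext h.symm rfl⟩

instance inl_range_normal : ((MonoidHom.inl A B).range).Normal := by
  constructor
  intro n hn g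
  rw [mem_inl_range_iff] at hn ⊢
  simp [hn]

instance inr_range_normal : ((MonoidHom.inr A B).range).Normal := by
  constructor
  intro n hn g
  rw [mem_inr_range_iff] at hn ⊢
  simp [hn]

end aux

section aux2
variable {G G' S S' : Type*} [Group G] [Group G'] [Group S] [Group S']

/-- half of the inr statement -/
lemma inr_map_le [Finite S]
    (hG' : ∀ N : Subgroup G', N.Normal → (N : Set G').Finite → N = ⊥)
    (Φ : G × S ≃* G' × S') :
    Subgroup.map Φ.toMonoidHom (MonoidHom.inr G S).range ≤ (MonoidHom.inr G' S').range := by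
  set N := Subgroup.map Φ.toMonoidHom (MonoidHom.inr G S).range with hN
  have hNnorm : N.Normal := Subgroup.Normal.map inferInstance _ Φ.surjective
  have hNfin : (N : Set (G' × S')).Finite := by
    have : ((MonoidHom.inr G S).range : Set (G × S)).Finite := by
      rw [MonoidHom.coe_range]; exact Set.finite_range _
    exact this.image _
  have hproj : Subgroup.map (MonoidHom.fst G' S') N = ⊥ := by
    apply hG'
    · exact Subgroup.Normal.map hNnorm _ (fun g' => ⟨(g', 1), rfl⟩)
    · exact hNfin.image _
  intro x hx
  rw [mem_inr_range_iff]
  have : x.1 ∈ Subgroup.map (MonoidHom.fst G' S') N := ⟨x, hx, rfl⟩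
  rw [hproj] at this
  exact this

lemma inr_map_eq [Finite S] [Finite S']
    (hG : ∀ N : Subgroup G, N.Normal → (N : Set G).Finite → N = ⊥)
    (hG' : ∀ N : Subgroup G', N.Normal → (N : Set G').Finite → N = ⊥)
    (Φ : G × S ≃* G' × S') :
    Subgroup.map Φ.toMonoidHom (MonoidHom.inr G S).range = (MonoidHom.inr G' S').range := by
  refine le_antisymm (inr_map_le hG' Φ) ?_
  have h2 := inr_map_le hG Φ.symm
  intro x hx
  have : Φ.symm x ∈ (MonoidHom.inr G S).range := h2 ⟨x, hx, rfl⟩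
  exact ⟨Φ.symm x, this, Φ.apply_symm_apply x⟩

lemma inl_map_le [Finite S] [Finite S']
    (hS' : Subgroup.center S' = ⊥)
    (hG : ∀ N : Subgroup G, N.Normal → (N : Set G).Finite → N = ⊥)
    (hG' : ∀ N : Subgroup G', N.Normal → (N : Set G').Finite → N = ⊥)
    (Φ : G × S ≃* G' × S') :
    Subgroup.map Φ.toMonoidHom (MonoidHom.inl G S).range ≤ (MonoidHom.inl G' S').range := by
  have hinr := inr_map_eq hG hG' Φ
  rintro x ⟨y, hy, rfl⟩
  have hy2 : y.2 = 1 := (mem_inl_range_iff y).1 hy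
  rw [mem_inl_range_iff]
  -- show (Φ y).2 ∈ center S'
  have : (Φ y).2 ∈ Subgroup.center S' := by
    rw [Subgroup.mem_center_iff]
    intro t'
    have ht' : ((1 : G'), t') ∈ (MonoidHom.inr G' S').range := ⟨t', rfl⟩
    rw [← hinr] at ht'
    obtain ⟨z, hz, hzeq⟩ := ht'
    have hz1 : z.1 = 1 := (mem_inr_range_iff z).1 hz
    have hcomm : y * z = z * y := by
      ext
      · simp [hz1]
      · simp [hy2]
    have : Φ y * Φ z = Φ z * Φ y := by
      rw [← map_mul, ← map_mul, hcomm]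
    have h2 := congrArg Prod.snd this
    have hzeq' : Φ z = (1, t') := hzeq
    simpa [hzeq'] using h2.symm
  rw [hS'] at this
  exact this

lemma inl_map_eq [Finite S] [Finite S']
    (hS : Subgroup.center S = ⊥) (hS' : Subgroup.center S' = ⊥)
    (hG : ∀ N : Subgroup G, N.Normal → (N : Set G).Finite → N = ⊥)
    (hG' : ∀ N : Subgroup G', N.Normal → (N : Set G').Finite → N = ⊥)
    (Φ : G × S ≃* G' × S') :
    Subgroup.map Φ.toMonoidHom (MonoidHom.inl G S).range = (MonoidHom.inl G' S').range := by
  refine le_antisymm (inl_map_le hS' hG hG' Φ) ?_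
  have h2 := inl_map_le hS hG' hG Φ.symm
  intro x hx
  have : Φ.symm x ∈ (MonoidHom.inl G S).range := h2 ⟨x, hx, rfl⟩
  exact ⟨Φ.symm x, this, Φ.apply_symm_apply x⟩

end aux2

/-- if `Φ : G × S ≅ G' × S'` is an isomorphism where `S, S'` are
finite groups with trivial center and `G, G'` have no nontrivial finite normal
subgroups, then `Φ` maps the factor `G` onto `G'` and the factor `S` onto
`S'`; in particular it restricts to isomorphisms `G ≅ G'` and `S ≅ S'`. -/
theorem direct_product_decomposition_rigidity
    {G G' S S' : Type*} [Group G] [Group G'] [Group S] [Group S']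
    [Finite S] [Finite S']
    (hS : Subgroup.center S = ⊥) (hS' : Subgroup.center S' = ⊥)
    (hG : ∀ N : Subgroup G, N.Normal → (N : Set G).Finite → N = ⊥)
    (hG' : ∀ N : Subgroup G', N.Normal → (N : Set G').Finite → N = ⊥)
    (Φ : G × S ≃* G' × S') :
    Subgroup.map Φ.toMonoidHom (MonoidHom.inl G S).range = (MonoidHom.inl G' S').range ∧
    Subgroup.map Φ.toMonoidHom (MonoidHom.inr G S).range = (MonoidHom.inr G' S').range ∧
    Nonempty (G ≃* G') ∧ Nonempty (S ≃* S') := by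
  have h1 := inl_map_eq hS hS' hG hG' Φ
  have h2 := inr_map_eq hG hG' Φ
  have injl : Function.Injective (MonoidHom.inl G S) := fun a b h => congrArg Prod.fst h
  have injl' : Function.Injective (MonoidHom.inl G' S') := fun a b h => congrArg Prod.fst h
  have injr : Function.Injective (MonoidHom.inr G S) := fun a b h => congrArg Prod.snd h
  have injr' : Function.Injective (MonoidHom.inr G' S') := fun a b h => congrArg Prod.snd h
  refine ⟨h1, h2, ⟨?_⟩, ⟨?_⟩⟩
  · exact (MonoidHom.ofInjective injl).trans ((Φ.subgroupMap _).trans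
      ((MulEquiv.subgroupCongr h1).trans (MonoidHom.ofInjective injl').symm))
  · exact (MonoidHom.ofInjective injr).trans ((Φ.subgroupMap _).trans
      ((MulEquiv.subgroupCongr h2).trans (MonoidHom.ofInjective injr').symm))
end
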